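/- arXiv:1605.00044 — 2 statements merged into one kernel-verified Lean document; each statement's English description precedes it below -/
import Mathlib

section
/- Let (E, ω) be a 2d-dimensional real symplectic vector space and let V, W ⊂ E be subspaces with dim V + dim W = 2d and dim(V ∩ W) = 1. Then for every neighborhood U of the identity in Sp(E,ω) there exists a symplectic transvection σ ∈ U such that σ(V) ∩ W = {0}. -/
/-- If V, W have complementary dimensions in a 2d-dimensional symplectic space and
dim(V ∩ W) = 1, then there is a symplectic transvection σ, arbitrarily close to the
identity, such that σ(V) ∩ W = {0}. -/
theorem transvection_makes_transverse (d : ℕ) (hd : 0 < d)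
    {E : Type*} [NormedAddCommGroup E] [NormedSpace ℝ E] [FiniteDimensional ℝ E]
    (hdim : Module.finrank ℝ E = 2*d)
    (ω : E →ₗ[ℝ] E →ₗ[ℝ] ℝ)
    (halt : ∀ x, ω x x = 0)
    (hnd : ∀ x, (∀ y, ω x y = 0) → x = 0)
    (V W : Submodule ℝ E)
    (hVW : Module.finrank ℝ V + Module.finrank ℝ W = 2*d)
    (hk : Module.finrank ℝ (V ⊓ W : Submodule ℝ E) = 1) :
    ∀ ε > 0, ∃ (u₀ : E) (c : ℝ) (σ : E →L[ℝ] E),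
      (∀ u, σ u = u + (c * ω u u₀) • u₀) ∧
      ‖σ - ContinuousLinearMap.id ℝ E‖ < ε ∧
      Submodule.map (σ : E →ₗ[ℝ] E) V ⊓ W = ⊥ := by
  intro ε hε
  -- get the spanning vector of V ⊓ W
  obtain ⟨v₀, hv₀ne, hv₀span⟩ := finrank_eq_one_iff'.mp hk
  have hv₀V : (v₀ : E) ∈ V := v₀.2.1
  have hv₀W : (v₀ : E) ∈ W := v₀.2.2
  have hv₀E : (v₀ : E) ≠ 0 := fun h => hv₀ne (Subtype.ext h)
  -- skew symmetry
  have hskew : ∀ x y, ω x y = - ω y x := by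
    intro x y
    have h := halt (x + y)
    have hx := halt x
    have hy := halt y
    simp [map_add] at h
    linarith
  -- H := V ⊔ W is a proper subspace
  set H : Submodule ℝ E := V ⊔ W with hH
  have hHrank : Module.finrank ℝ H + 1 = 2 * d := by
    have h2 := Submodule.finrank_sup_add_finrank_inf_eq V W
    rw [hk, hVW] at h2
    exact h2
  have hHne : H ≠ ⊤ := by
    intro h
    have : Module.finrank ℝ H = 2 * d := by
      rw [h, finrank_top]; exact hdim
    omega
  obtain ⟨z, hz⟩ : ∃ z, z ∉ H := by
    by_contra h
    push_neg at h
    exact hHne (Submodule.eq_top_iff'.mpr h)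
  -- some y with ω v₀ y ≠ 0
  obtain ⟨y, hy⟩ : ∃ y, ω (v₀ : E) y ≠ 0 := by
    by_contra h
    push_neg at h
    exact hv₀E (hnd _ h)
  -- choose u₀ ∉ H with ω v₀ u₀ ≠ 0
  obtain ⟨u₀, hu₀H, hu₀ω⟩ : ∃ u₀, u₀ ∉ H ∧ ω (v₀ : E) u₀ ≠ 0 := by
    by_cases hzω : ω (v₀ : E) z = 0
    · by_cases hyH : y ∈ H
      · refine ⟨y + z, fun h => hz ?_, ?_⟩
        · have := Submodule.sub_mem H h hyH
          simpa using this
        · simp [map_add, hzω, hy]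
      · exact ⟨y, hyH, hy⟩
    · exact ⟨z, hz, hzω⟩
  -- the transvection as a linear map family
  set T : E →ₗ[ℝ] E := (ω.flip u₀).smulRight u₀ with hT
  set Tc : E →L[ℝ] E := LinearMap.toContinuousLinearMap T with hTc
  set c : ℝ := ε / (‖Tc‖ + 1) with hc
  have hTcnn : (0:ℝ) ≤ ‖Tc‖ := norm_nonneg _
  have hcpos : 0 < c := div_pos hε (by linarith)
  set σ : E →L[ℝ] E := LinearMap.toContinuousLinearMap (LinearMap.id + c • T) with hσdef
  have hσ : ∀ u, σ u = u + (c * ω u u₀) • u₀ := by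
    intro u
    simp [hσdef, hT, smul_smul]
  refine ⟨u₀, c, σ, hσ, ?_, ?_⟩
  · have hdiff : σ - ContinuousLinearMap.id ℝ E = c • Tc := by
      ext u
      simp [hσ u, hTc, hT, smul_smul]
    rw [hdiff, norm_smul c Tc, Real.norm_eq_abs, abs_of_pos hcpos]
    calc c * ‖Tc‖ < c * (‖Tc‖ + 1) := by nlinarith
      _ = ε / (‖Tc‖ + 1) * (‖Tc‖ + 1) := rfl
      _ = ε := by field_simp
  · rw [eq_bot_iff]
    rintro x ⟨hxm, hxW⟩
    obtain ⟨v, hvV, rfl⟩ := hxm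
    have hx : (σ : E →ₗ[ℝ] E) v = v + (c * ω v u₀) • u₀ := hσ v
    have hωv : ω v u₀ = 0 := by
      by_contra hne
      apply hu₀H
      have hcoef : c * ω v u₀ ≠ 0 := mul_ne_zero (ne_of_gt hcpos) hne
      have hmem : (c * ω v u₀) • u₀ ∈ H := by
        have h1 : (σ : E →ₗ[ℝ] E) v - v ∈ H := by
          exact Submodule.sub_mem H (Submodule.mem_sup_right hxW) (Submodule.mem_sup_left hvV)
        rw [hx] at h1
        simpa using h1
      have := Submodule.smul_mem H (c * ω v u₀)⁻¹ hmem
      rwa [inv_smul_smul₀ hcoef] at this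
    have hxv : (σ : E →ₗ[ℝ] E) v = v := by rw [hx, hωv]; simp
    have hvVW : v ∈ V ⊓ W := ⟨hvV, by rw [← hxv]; exact hxW⟩
    obtain ⟨t, ht⟩ := hv₀span ⟨v, hvVW⟩
    have hveq : v = t • (v₀ : E) := by
      have := congrArg (Subtype.val) ht
      simpa using this.symm
    have ht0 : t = 0 := by
      have h0 : ω v u₀ = t * ω (v₀ : E) u₀ := by rw [hveq]; simp
      rw [hωv] at h0
      rcases mul_eq_zero.mp h0.symm with h | h
      · exact h
      · exact absurd h hu₀ω
    have : v = 0 := by rw [hveq, ht0, zero_smul]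
    rw [hxv, this]
    exact Submodule.zero_mem ⊥
end

section
/- Let (E, ω) be a 2d-dimensional real symplectic vector space and V, W ⊂ E subspaces with dim V + dim W = 2d and dim(V ∩ W) = k > 0. Then there exist k symplectic transvections σ₁, …, σ_k, each arbitrarily close to the identity, such that (σ₁ ∘ ⋯ ∘ σ_k)(V) ∩ W = {0}. -/
open Module Submodule

section Aux

variable {E : Type*} [NormedAddCommGroup E] [NormedSpace ℝ E] [FiniteDimensional ℝ E]

private lemma omega_skew (ω : E →ₗ[ℝ] E →ₗ[ℝ] ℝ) (halt : ∀ x, ω x x = 0) (x y : E) :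
    ω x y = - ω y x := by
  have h := halt (x + y)
  simp only [map_add, LinearMap.add_apply, halt] at h
  linarith

/-- One step: a single transvection reduces the dimension of the intersection by one. -/
private lemma transvection_step (d k : ℕ)
    (hdim : finrank ℝ E = 2*d)
    (ω : E →ₗ[ℝ] E →ₗ[ℝ] ℝ) (halt : ∀ x, ω x x = 0)
    (hnd : ∀ x, (∀ y, ω x y = 0) → x = 0)
    (V W : Submodule ℝ E)
    (hVW : finrank ℝ V + finrank ℝ W = 2*d)
    (hk : finrank ℝ (V ⊓ W : Submodule ℝ E) = k+1)
    {ε : ℝ} (hε : 0 < ε) :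
    ∃ σ : E →L[ℝ] E,
      (∃ (u₀ : E) (c : ℝ), ∀ u, σ u = u + (c * ω u u₀) • u₀) ∧
      ‖σ - ContinuousLinearMap.id ℝ E‖ < ε ∧
      finrank ℝ (map (σ : E →ₗ[ℝ] E) V) = finrank ℝ V ∧
      finrank ℝ (map (σ : E →ₗ[ℝ] E) V ⊓ W : Submodule ℝ E) = k := by
  -- V ⊔ W is a proper subspace
  have hsup : finrank ℝ (V ⊔ W : Submodule ℝ E) + (k+1) = 2*d := by
    rw [← hk, Submodule.finrank_sup_add_finrank_inf_eq, hVW]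
  have hsup_ne : (V ⊔ W : Submodule ℝ E) ≠ ⊤ := by
    intro h
    rw [h, finrank_top, hdim] at hsup
    omega
  obtain ⟨u₁, hu₁⟩ : ∃ u₁, u₁ ∉ (V ⊔ W : Submodule ℝ E) := by
    by_contra h
    push_neg at h
    exact hsup_ne (Submodule.eq_top_iff'.2 h)
  -- a nonzero vector in V ⊓ W and a vector not symplectically orthogonal to it
  obtain ⟨v₀, hv₀, hv₀0⟩ : ∃ v₀, v₀ ∈ V ⊓ W ∧ v₀ ≠ 0 := by
    apply Submodule.exists_mem_ne_zero_of_ne_bot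
    intro h
    rw [h, finrank_bot] at hk
    omega
  obtain ⟨u₂, hu₂⟩ : ∃ u₂, ω v₀ u₂ ≠ 0 := by
    by_contra h
    push_neg at h
    exact hv₀0 (hnd v₀ h)
  -- choose u₀ outside V ⊔ W with ω v₀ u₀ ≠ 0
  obtain ⟨u₀, hu₀P, hu₀v⟩ : ∃ u₀, u₀ ∉ (V ⊔ W : Submodule ℝ E) ∧ ω v₀ u₀ ≠ 0 := by
    by_cases h1 : ω v₀ u₁ ≠ 0
    · exact ⟨u₁, hu₁, h1⟩
    push_neg at h1
    by_cases h2 : u₂ ∈ (V ⊔ W : Submodule ℝ E)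
    · refine ⟨u₁ + u₂, fun h => hu₁ ?_, ?_⟩
      · have := Submodule.sub_mem _ h h2
        simpa using this
      · rw [map_add, h1, zero_add]
        exact hu₂
    · exact ⟨u₂, h2, hu₂⟩
  -- build the transvection
  set g : E →L[ℝ] ℝ := LinearMap.toContinuousLinearMap (ω.flip u₀) with hg
  set S : E →L[ℝ] E := g.smulRight u₀ with hS
  set c : ℝ := ε / (2 * (‖S‖ + 1)) with hcdef
  have hSpos : (0:ℝ) < ‖S‖ + 1 := by positivity
  have hc : 0 < c := by positivity
  set σ : E →L[ℝ] E := ContinuousLinearMap.id ℝ E + c • S with hσ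
  have hform : ∀ u, σ u = u + (c * ω u u₀) • u₀ := by
    intro u
    simp only [hσ, hS, hg, ContinuousLinearMap.add_apply, ContinuousLinearMap.id_apply,
      ContinuousLinearMap.smul_apply, ContinuousLinearMap.smulRight_apply,
      LinearMap.coe_toContinuousLinearMap', LinearMap.flip_apply, smul_smul]
  refine ⟨σ, ⟨u₀, c, hform⟩, ?_, ?_, ?_⟩
  · -- norm estimate
    have : σ - ContinuousLinearMap.id ℝ E = c • S := by
      rw [hσ]; abel
    rw [this, norm_smul c S, Real.norm_eq_abs, abs_of_pos hc]
    have h1 : c * ‖S‖ ≤ c * (‖S‖ + 1) := by nlinarith [norm_nonneg S]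
    have h2 : c * (‖S‖ + 1) = ε / 2 := by
      rw [hcdef]; field_simp
    linarith
  all_goals {
    -- injectivity of σ
    have hω : ∀ (u : E) (t : ℝ), ω (u + t • u₀) u₀ = ω u u₀ := by
      intro u t
      simp [map_add, map_smul, LinearMap.add_apply, LinearMap.smul_apply, halt, smul_eq_mul]
    have hinj : Function.Injective σ := by
      have hli : Function.LeftInverse (fun u => u - (c * ω u u₀) • u₀) σ := by
        intro u
        simp only [hform]
        rw [hω]
        abel
      exact hli.injective
    first
    | · -- finrank of the image
        exact (LinearEquiv.finrank_eq
          (Submodule.equivMapOfInjective (σ : E →ₗ[ℝ] E) hinj V)).symm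
    | · -- finrank of the new intersection
        have hH : map (σ : E →ₗ[ℝ] E) V ⊓ W
            = V ⊓ W ⊓ LinearMap.ker (ω.flip u₀) := by
          ext x
          constructor
          · rintro ⟨hx1, hx2⟩
            obtain ⟨v, hv, rfl⟩ := hx1
            have hσv : σ v = v + (c * ω v u₀) • u₀ := hform v
            have hωv : ω v u₀ = 0 := by
              by_contra hne
              have hne' : c * ω v u₀ ≠ 0 := mul_ne_zero (ne_of_gt hc) hne
              have hmem : u₀ ∈ (V ⊔ W : Submodule ℝ E) := by
                have h1 : (σ : E →ₗ[ℝ] E) v - v ∈ (V ⊔ W : Submodule ℝ E) :=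
                  Submodule.sub_mem _ (Submodule.mem_sup_right hx2)
                    (Submodule.mem_sup_left hv)
                have h2 : (σ : E →ₗ[ℝ] E) v - v = (c * ω v u₀) • u₀ := by
                  show σ v - v = _
                  rw [hσv]; abel
                have h3 : u₀ = (c * ω v u₀)⁻¹ • ((σ : E →ₗ[ℝ] E) v - v) := by
                  rw [h2, smul_smul, inv_mul_cancel₀ hne', one_smul]
                rw [h3]
                exact Submodule.smul_mem _ _ h1
              exact hu₀P hmem
            have hfix : (σ : E →ₗ[ℝ] E) v = v := by
              show σ v = v
              rw [hσv, hωv, mul_zero, zero_smul, add_zero]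
            rw [hfix]
            rw [hfix] at hx2
            exact ⟨⟨hv, hx2⟩, by simpa [LinearMap.mem_ker, LinearMap.flip_apply] using hωv⟩
          · rintro ⟨⟨hxV, hxW⟩, hxH⟩
            have hωx : ω x u₀ = 0 := by
              simpa [LinearMap.mem_ker, LinearMap.flip_apply] using hxH
            have hfix : σ x = x := by
              rw [hform, hωx, mul_zero, zero_smul, add_zero]
            exact ⟨⟨x, hxV, hfix⟩, hxW⟩
        rw [hH]
        -- rank-nullity for the restriction of ω(·, u₀) to V ⊓ W
        set p : Submodule ℝ E := V ⊓ W with hp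
        set f : p →ₗ[ℝ] ℝ := (ω.flip u₀) ∘ₗ p.subtype with hf
        have hfsurj : Function.Surjective f := by
          intro r
          refine ⟨(r / ω v₀ u₀) • ⟨v₀, hv₀⟩, ?_⟩
          simp only [hf, LinearMap.comp_apply, map_smul, Submodule.coe_subtype,
            Submodule.coe_smul, LinearMap.flip_apply, smul_eq_mul]
          field_simp
        have hrn := LinearMap.finrank_range_add_finrank_ker f
        rw [LinearMap.range_eq_top.2 hfsurj, finrank_top, finrank_self] at hrn
        have hker : finrank ℝ (LinearMap.ker f) = k := by
          rw [hk] at hrn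
          omega
        have hker2 : LinearMap.ker f = Submodule.comap p.subtype
            (LinearMap.ker (ω.flip u₀)) := LinearMap.ker_comp _ _
        have hmap := Submodule.map_comap_subtype p (LinearMap.ker (ω.flip u₀))
        rw [← hmap, ← hker2, Submodule.finrank_map_subtype_eq]
        exact hker }

/-- Induction on the dimension of the intersection. -/
private lemma transvections_aux (d : ℕ)
    (hdim : finrank ℝ E = 2*d)
    (ω : E →ₗ[ℝ] E →ₗ[ℝ] ℝ) (halt : ∀ x, ω x x = 0)
    (hnd : ∀ x, (∀ y, ω x y = 0) → x = 0) :
    ∀ (k : ℕ) (V W : Submodule ℝ E),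
      finrank ℝ V + finrank ℝ W = 2*d →
      finrank ℝ (V ⊓ W : Submodule ℝ E) = k →
      ∀ ε > 0, ∃ σ : Fin k → (E →L[ℝ] E),
        (∀ i, ∃ (u₀ : E) (c : ℝ), ∀ u, σ i u = u + (c * ω u u₀) • u₀) ∧
        (∀ i, ‖σ i - ContinuousLinearMap.id ℝ E‖ < ε) ∧
        Submodule.map (((List.ofFn σ).prod : E →L[ℝ] E) : E →ₗ[ℝ] E) V ⊓ W = ⊥ := by
  intro k
  induction k with
  | zero =>
    intro V W hVW hk ε hε
    refine ⟨Fin.elim0, fun i => i.elim0, fun i => i.elim0, ?_⟩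
    rw [List.ofFn_zero, List.prod_nil]
    have : ((1 : E →L[ℝ] E) : E →ₗ[ℝ] E) = LinearMap.id := rfl
    rw [this, Submodule.map_id]
    exact Submodule.finrank_eq_zero.1 hk
  | succ k ih =>
    intro V W hVW hk ε hε
    obtain ⟨σ₀, hσ₀form, hσ₀norm, hσ₀rank, hσ₀inter⟩ :=
      transvection_step d k hdim ω halt hnd V W hVW hk hε
    obtain ⟨σr, hrform, hrnorm, hrinter⟩ :=
      ih (map (σ₀ : E →ₗ[ℝ] E) V) W (by rw [hσ₀rank]; exact hVW) hσ₀inter ε hε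
    refine ⟨Fin.snoc σr σ₀, ?_, ?_, ?_⟩
    · intro i
      refine Fin.lastCases ?_ ?_ i
      · simpa [Fin.snoc_last] using hσ₀form
      · intro j; simpa [Fin.snoc_castSucc] using hrform j
    · intro i
      refine Fin.lastCases ?_ ?_ i
      · simpa [Fin.snoc_last] using hσ₀norm
      · intro j; simpa [Fin.snoc_castSucc] using hrnorm j
    · have hlist : (List.ofFn (Fin.snoc σr σ₀ : Fin (k+1) → E →L[ℝ] E)).prod
          = (List.ofFn σr).prod * σ₀ := by
        rw [List.ofFn_succ']
        simp [Fin.snoc_castSucc, Fin.snoc_last]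
      rw [hlist, ContinuousLinearMap.mul_def]
      have hcoe : ((((List.ofFn σr).prod).comp σ₀ : E →L[ℝ] E) : E →ₗ[ℝ] E)
          = (((List.ofFn σr).prod : E →L[ℝ] E) : E →ₗ[ℝ] E).comp (σ₀ : E →ₗ[ℝ] E) :=
        rfl
      rw [hcoe, Submodule.map_comp]
      exact hrinter

end Aux

/-- If V, W have complementary dimensions in a 2d-dimensional symplectic space and
dim(V ∩ W) = k > 0, then there are k symplectic transvections σ₁,…,σ_k, each arbitrarily
close to the identity, with (σ₁ ∘ ⋯ ∘ σ_k)(V) ∩ W = {0}. -/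
theorem transvections_make_transverse (d k : ℕ) (hk0 : 0 < k)
    {E : Type*} [NormedAddCommGroup E] [NormedSpace ℝ E] [FiniteDimensional ℝ E]
    (hdim : Module.finrank ℝ E = 2*d)
    (ω : E →ₗ[ℝ] E →ₗ[ℝ] ℝ)
    (halt : ∀ x, ω x x = 0)
    (hnd : ∀ x, (∀ y, ω x y = 0) → x = 0)
    (V W : Submodule ℝ E)
    (hVW : Module.finrank ℝ V + Module.finrank ℝ W = 2*d)
    (hk : Module.finrank ℝ (V ⊓ W : Submodule ℝ E) = k) :
    ∀ ε > 0, ∃ σ : Fin k → (E →L[ℝ] E),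
      (∀ i, ∃ (u₀ : E) (c : ℝ), ∀ u, σ i u = u + (c * ω u u₀) • u₀) ∧
      (∀ i, ‖σ i - ContinuousLinearMap.id ℝ E‖ < ε) ∧
      Submodule.map (((List.ofFn σ).prod : E →L[ℝ] E) : E →ₗ[ℝ] E) V ⊓ W = ⊥ := by
  intro ε hε
  exact transvections_aux d hdim ω halt hnd k V W hVW hk ε hε
end
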